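/- If V_1, ..., V_{n+1} are exchangeable real-valued random variables such that ties among them occur with probability zero, then for any β ∈ (0,1), the probability that V_{n+1} ≤ Quantile(β; {V_1,...,V_n} ∪ {∞}) is at most β + 1/(n+1). -/

import Mathlib

open MeasureTheory

/-- The `β`-quantile of a finite multiset of extended reals:
the `⌈β·m⌉`-th smallest element, where `m` is the size of the multiset. -/
noncomputable def mquantile (β : ℝ) (s : Multiset EReal) : EReal :=
  (s.sort (· ≤ ·)).getD (⌈β * (s.card : ℝ)⌉.toNat - 1) ⊤

lemma sorted_countP_lt_le {α : Type*} [LinearOrder α] (d : α) :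
    ∀ (l : List α), l.Pairwise (· ≤ ·) → ∀ (m : ℕ) (v : α), m < l.length →
      v ≤ l.getD m d → l.countP (fun a => a < v) ≤ m := by
  intro l
  induction l with
  | nil => intro _ m v hm; simp at hm
  | cons a t ih =>
    intro hs m v hm hv
    cases m with
    | zero =>
      simp only [List.getD_cons_zero] at hv
      have : ∀ x ∈ a :: t, ¬ x < v := by
        intro x hx
        rcases List.mem_cons.1 hx with rfl | hx
        · exact not_lt.2 hv
        · exact not_lt.2 (le_trans hv ((List.pairwise_cons.1 hs).1 x hx))
      have : (a :: t).countP (fun a => a < v) = 0 := List.countP_eq_zero.2 (by intro x hx; simpa using this x hx)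
      omega
    | succ m =>
      have ht : t.Pairwise (· ≤ ·) := (List.pairwise_cons.1 hs).2
      have := ih ht m v (by simpa using hm) (by simpa using hv)
      calc (a :: t).countP (fun a => a < v) ≤ t.countP (fun a => a < v) + 1 := by
            rw [List.countP_cons]; split <;> omega
        _ ≤ m + 1 := by omega

-- rank function
noncomputable def rkF (n : ℕ) (j : Fin (n+1)) (x : Fin (n+1) → ℝ) : ℕ :=
  (Finset.univ.filter fun i => x i ≤ x j).card

lemma rk_pos (n : ℕ) (j : Fin (n+1)) (x : Fin (n+1) → ℝ) : 1 ≤ rkF n j x :=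
  Finset.card_pos.2 ⟨j, by simp [rkF]⟩

lemma rk_strictMono (n : ℕ) (x : Fin (n+1) → ℝ) {j j' : Fin (n+1)} (h : x j < x j') :
    rkF n j x < rkF n j' x := by
  apply Finset.card_lt_card
  constructor
  · intro i hi
    simp only [Finset.mem_filter, Finset.mem_univ, true_and] at hi ⊢
    exact hi.trans h.le
  · intro hsub
    have := hsub (by simp : j' ∈ Finset.univ.filter fun i => x i ≤ x j')
    simp only [Finset.mem_filter, Finset.mem_univ, true_and] at this
    exact absurd (lt_of_le_of_lt this h) (lt_irrefl _)

lemma rk_card_le (n k : ℕ) (x : Fin (n+1) → ℝ) (hinj : Function.Injective x) :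
    (Finset.univ.filter fun j => rkF n j x ≤ k).card ≤ k := by
  have hinj' : Set.InjOn (fun j => rkF n j x) (Finset.univ.filter fun j => rkF n j x ≤ k) := by
    intro a _ b _ hab
    by_contra hne
    rcases lt_trichotomy (x a) (x b) with h | h | h
    · exact absurd hab (Nat.ne_of_lt (rk_strictMono n x h))
    · exact hne (hinj h)
    · exact absurd hab.symm (Nat.ne_of_lt (rk_strictMono n x h))
  calc (Finset.univ.filter fun j => rkF n j x ≤ k).card
      ≤ (Finset.Icc 1 k).card := by
        apply Finset.card_le_card_of_injOn _ _ hinj'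
        intro j hj
        simp only [Finset.mem_coe, Finset.mem_filter, Finset.mem_univ, true_and] at hj
        exact Finset.mem_Icc.2 ⟨rk_pos n j x, hj⟩
    _ = k := by simp

lemma quantile_rank (n k : ℕ) (hk1 : 1 ≤ k) (hkn : k ≤ n) (β : ℝ)
    (x : Fin (n+1) → ℝ) (hinj : Function.Injective x)
    (hkdef : (⌈β * ((n:ℝ)+1)⌉).toNat = k)
    (hle : ((x (Fin.last n) : ℝ) : EReal) ≤
      mquantile β ((Finset.univ.val.map fun i : Fin n => ((x i.castSucc : ℝ) : EReal)) + {⊤})) :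
    rkF n (Fin.last n) x ≤ k := by
  set v : EReal := ((x (Fin.last n) : ℝ) : EReal) with hv
  set s : Multiset EReal :=
    (Finset.univ.val.map fun i : Fin n => ((x i.castSucc : ℝ) : EReal)) + {⊤} with hs
  have hcard : s.card = n + 1 := by
    simp [hs]
  set l : List EReal := s.sort (· ≤ ·) with hl
  have hlen : l.length = n + 1 := by rw [hl, Multiset.length_sort, hcard]
  have hsorted : l.Pairwise (· ≤ ·) := Multiset.pairwise_sort _ _
  have hq : mquantile β s = l.getD (k - 1) ⊤ := by
    unfold mquantile
    rw [hcard]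
    congr 1
    rw [← hkdef]
    congr 2
    push_cast
    ring
  have hcount : l.countP (fun a => a < v) ≤ k - 1 := by
    apply sorted_countP_lt_le ⊤ l hsorted (k - 1) v (by omega)
    rw [← hq]
    exact hle
  have hcount' : s.countP (fun a => a < v) ≤ k - 1 := by
    rwa [show s.countP (fun a => a < v) = l.countP (fun a => a < v) by
      rw [hl, ← Multiset.coe_countP]
      congr 1
      exact (Multiset.sort_eq _ _).symm]
  have htop : ¬ ((⊤ : EReal) < v) := by simp [hv]
  have hcnt2 : (Finset.univ.filter fun i : Fin n => x i.castSucc ≤ x (Fin.last n)).card ≤ k - 1 := by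
    have heq : ∀ i : Fin n, (x i.castSucc ≤ x (Fin.last n)) ↔ (((x i.castSucc : ℝ) : EReal) < v) := by
      intro i
      rw [hv, EReal.coe_lt_coe_iff]
      constructor
      · intro h
        rcases lt_or_eq_of_le h with h | h
        · exact h
        · exact absurd (hinj h) (Fin.ne_last_of_lt (Fin.castSucc_lt_last i))
      · exact le_of_lt
    calc (Finset.univ.filter fun i : Fin n => x i.castSucc ≤ x (Fin.last n)).card
        = (Finset.univ.filter fun i : Fin n => ((x i.castSucc : ℝ) : EReal) < v).card := by
          apply Finset.card_bij (fun a _ => a) <;> simp_all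
      _ = s.countP (fun a => a < v) := by
          rw [hs, Multiset.countP_add, Multiset.countP_map]
          rw [show ({⊤} : Multiset EReal) = ⊤ ::ₘ 0 from rfl, Multiset.countP_cons]
          simp [htop, Finset.card, Finset.filter_val]
      _ ≤ k - 1 := hcount'
  have hsplit : rkF n (Fin.last n) x =
      (Finset.univ.filter fun i : Fin n => x i.castSucc ≤ x (Fin.last n)).card + 1 := by
    unfold rkF
    rw [Finset.card_filter, Finset.card_filter, Fin.sum_univ_castSucc]
    simp
  omega

lemma card_filter_comp {m : ℕ} (σ : Equiv.Perm (Fin m)) (p : Fin m → Prop) [DecidablePred p] :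
    (Finset.univ.filter fun i => p (σ i)).card = (Finset.univ.filter p).card := by
  apply Finset.card_bij' (fun i _ => σ i) (fun j _ => σ.symm j) <;> simp

lemma rk_comp (n : ℕ) (σ : Equiv.Perm (Fin (n+1))) (j : Fin (n+1)) (x : Fin (n+1) → ℝ) :
    rkF n j (x ∘ σ) = rkF n (σ j) x := by
  unfold rkF
  exact card_filter_comp σ (fun i => x i ≤ x (σ j))

lemma rk_measurable (n : ℕ) (j : Fin (n+1)) : Measurable (rkF n j) := by
  have : rkF n j = fun x => ∑ i : Fin (n+1), if x i ≤ x j then 1 else 0 := by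
    funext x; rw [rkF, Finset.card_filter]
  rw [this]
  apply Finset.measurable_sum
  intro i _
  exact Measurable.ite (measurableSet_le (measurable_pi_apply i) (measurable_pi_apply j))
    measurable_const measurable_const

open MeasureTheory
open scoped ENNReal
lemma rank_prob_le (n k : ℕ) (μ : Measure (Fin (n+1) → ℝ)) [IsProbabilityMeasure μ]
    (hperm : ∀ σ : Equiv.Perm (Fin (n+1)), Measure.map (fun x => x ∘ σ) μ = μ)
    (hD : μ {x | ¬ Function.Injective x} = 0) :
    (n + 1 : ℝ≥0∞) * μ {x | rkF n (Fin.last n) x ≤ k} ≤ k := by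
  set D : Set (Fin (n+1) → ℝ) := {x | Function.Injective x} with hDdef
  have hDmeas : MeasurableSet D := by
    have : D = ⋂ (i) (j) (_ : i ≠ j), {x : Fin (n+1) → ℝ | x i ≠ x j} := by
      ext x
      simp only [Set.mem_iInter, Set.mem_setOf_eq, hDdef]
      constructor
      · intro hx i j hij hne; exact hij (hx hne)
      · intro h i j hij
        by_contra hne
        exact h i j hne hij
    rw [this]
    refine MeasurableSet.iInter fun i => MeasurableSet.iInter fun j =>
      MeasurableSet.iInter fun _ => ?_
    exact (measurableSet_eq_fun (measurable_pi_apply i) (measurable_pi_apply j)).compl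
  have hDc : μ Dᶜ = 0 := hD
  set E : Fin (n+1) → Set (Fin (n+1) → ℝ) := fun j => {x | rkF n j x ≤ k} with hEdef
  have hEmeas : ∀ j, MeasurableSet (E j) :=
    fun j => rk_measurable n j (measurableSet_Iic (a := k))
  have hTmeas : ∀ σ : Equiv.Perm (Fin (n+1)),
      Measurable (fun x : Fin (n+1) → ℝ => x ∘ σ) :=
    fun σ => measurable_pi_lambda _ fun i => measurable_pi_apply (σ i)
  have hEq : ∀ j, μ (E j) = μ (E (Fin.last n)) := by
    intro j
    set σ := Equiv.swap j (Fin.last n) with hσ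
    have h1 : μ (E (Fin.last n)) = μ ((fun x => x ∘ σ) ⁻¹' (E (Fin.last n))) := by
      conv_lhs => rw [← hperm σ]
      rw [Measure.map_apply (hTmeas σ) (hEmeas _)]
    have h2 : (fun x : Fin (n+1) → ℝ => x ∘ σ) ⁻¹' (E (Fin.last n)) = E j := by
      ext x
      simp only [Set.mem_preimage, hEdef, Set.mem_setOf_eq, rk_comp]
      rw [hσ, Equiv.swap_apply_right]
    rw [h2] at h1
    exact h1.symm
  have hpoint : ∀ x, (∑ j, (E j ∩ D).indicator (fun _ => (1:ℝ≥0∞)) x) ≤ k := by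
    intro x
    by_cases hx : x ∈ D
    · have : ∀ j, (E j ∩ D).indicator (fun _ => (1:ℝ≥0∞)) x
          = if rkF n j x ≤ k then 1 else 0 := by
        intro j
        rw [Set.indicator_apply]
        congr 1
        simp [hEdef, hx]
      simp only [this]
      have : (∑ j, if rkF n j x ≤ k then (1:ℝ≥0∞) else 0)
          = ((Finset.univ.filter fun j => rkF n j x ≤ k).card : ℝ≥0∞) := by
        rw [Finset.card_filter]
        push_cast
        exact Finset.sum_congr rfl fun j _ => by split <;> simp
      rw [this]
      exact_mod_cast Nat.cast_le.2 (rk_card_le n k x hx)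
    · have : ∀ j, (E j ∩ D).indicator (fun _ => (1:ℝ≥0∞)) x = 0 := by
        intro j
        apply Set.indicator_of_notMem
        intro h
        exact hx h.2
      simp [this]
  have hsum : ∑ j, μ (E j ∩ D) ≤ k := by
    have h1 : ∀ j, μ (E j ∩ D) = ∫⁻ x, (E j ∩ D).indicator (fun _ => (1:ℝ≥0∞)) x ∂μ := by
      intro j
      exact (lintegral_indicator_one ((hEmeas j).inter hDmeas)).symm
    calc ∑ j, μ (E j ∩ D)
        = ∫⁻ x, ∑ j, (E j ∩ D).indicator (fun _ => (1:ℝ≥0∞)) x ∂μ := by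
          rw [lintegral_finset_sum]
          · exact Finset.sum_congr rfl fun j _ => h1 j
          · exact fun j _ => (measurable_const.indicator ((hEmeas j).inter hDmeas))
      _ ≤ ∫⁻ _, (k : ℝ≥0∞) ∂μ := lintegral_mono hpoint
      _ = k := by simp
  have hED : ∀ j, μ (E j ∩ D) = μ (E j) := fun j => measure_inter_conull hDc
  calc (n + 1 : ℝ≥0∞) * μ (E (Fin.last n))
      = ∑ _j : Fin (n+1), μ (E (Fin.last n)) := by
        rw [Finset.sum_const, Finset.card_univ, Fintype.card_fin, nsmul_eq_mul]
        push_cast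
        ring
    _ = ∑ j, μ (E j ∩ D) := Finset.sum_congr rfl fun j _ => by rw [hED j, hEq j]
    _ ≤ k := hsum

theorem stmt_1 {Ω : Type*} [MeasurableSpace Ω] (ℙ : Measure Ω) [IsProbabilityMeasure ℙ]
    (n : ℕ) (V : Fin (n + 1) → Ω → ℝ) (hmeas : ∀ i, Measurable (V i))
    (hexch : ∀ σ : Equiv.Perm (Fin (n + 1)),
      Measure.map (fun ω i => V (σ i) ω) ℙ = Measure.map (fun ω i => V i ω) ℙ)
    (hties : ∀ i j : Fin (n + 1), i ≠ j → ℙ {ω | V i ω = V j ω} = 0)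
    (β : ℝ) (hβ : β ∈ Set.Ioo (0 : ℝ) 1) :
    ℙ {ω | ((V (Fin.last n) ω : ℝ) : EReal) ≤
        mquantile β
          ((Finset.univ.val.map fun i : Fin n => ((V i.castSucc ω : ℝ) : EReal)) + {⊤})} ≤
      ENNReal.ofReal (β + 1 / (n + 1)) := by
  obtain ⟨hβ0, hβ1⟩ := hβ
  have hnpos : (0:ℝ) < (n:ℝ) + 1 := by positivity
  have hpathm : Measurable (fun ω i => V i ω : Ω → Fin (n+1) → ℝ) :=
    measurable_pi_lambda _ hmeas
  set μ := Measure.map (fun ω i => V i ω) ℙ with hμ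
  haveI : IsProbabilityMeasure μ := Measure.isProbabilityMeasure_map hpathm.aemeasurable
  set k := (⌈β * ((n:ℝ)+1)⌉).toNat with hk
  have hcpos : 0 < ⌈β * ((n:ℝ)+1)⌉ := Int.ceil_pos.2 (by positivity)
  have hk1 : 1 ≤ k := by omega
  have hkreal : (k:ℝ) ≤ β * ((n:ℝ)+1) + 1 := by
    have h1 : (⌈β * ((n:ℝ)+1)⌉ : ℝ) < β * ((n:ℝ)+1) + 1 := Int.ceil_lt_add_one _
    have h2 : ((k:ℤ) : ℝ) = (⌈β * ((n:ℝ)+1)⌉ : ℝ) := by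
      rw [hk, Int.toNat_of_nonneg hcpos.le]
    calc (k:ℝ) = ((k:ℤ):ℝ) := by push_cast; ring
      _ = (⌈β * ((n:ℝ)+1)⌉ : ℝ) := h2
      _ ≤ β * ((n:ℝ)+1) + 1 := h1.le
  have hβsum : (k:ℝ) / ((n:ℝ)+1) ≤ β + 1 / ((n:ℝ)+1) := by
    rw [div_le_iff₀ hnpos]
    have : (β + 1 / ((n:ℝ)+1)) * ((n:ℝ)+1) = β * ((n:ℝ)+1) + 1 := by
      field_simp
    rw [this]
    exact hkreal
  by_cases hkn : k ≤ n
  · -- main case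
    have hincl : {ω | ((V (Fin.last n) ω : ℝ) : EReal) ≤
          mquantile β
            ((Finset.univ.val.map fun i : Fin n => ((V i.castSucc ω : ℝ) : EReal)) + {⊤})} ⊆
        ((fun ω i => V i ω) ⁻¹' {x | rkF n (Fin.last n) x ≤ k}) ∪
          (⋃ i, ⋃ j, ⋃ (_ : i ≠ j), {ω | V i ω = V j ω}) := by
      intro ω hω
      by_cases hinj : Function.Injective (fun i => V i ω)
      · left
        exact quantile_rank n k hk1 hkn β (fun i => V i ω) hinj hk.symm hω
      · right
        rw [Function.not_injective_iff] at hinj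
        obtain ⟨a, b, hab, hne⟩ := hinj
        exact Set.mem_iUnion.2 ⟨a, Set.mem_iUnion.2 ⟨b, Set.mem_iUnion.2 ⟨hne, hab⟩⟩⟩
    have hT0 : ℙ (⋃ i, ⋃ j, ⋃ (_ : i ≠ j), {ω | V i ω = V j ω}) = 0 :=
      measure_iUnion_null fun i => measure_iUnion_null fun j =>
        measure_iUnion_null fun hij => hties i j hij
    have hperm : ∀ σ : Equiv.Perm (Fin (n+1)),
        Measure.map (fun x : Fin (n+1) → ℝ => x ∘ σ) μ = μ := by
      intro σ
      have hTσ : Measurable (fun x : Fin (n+1) → ℝ => x ∘ σ) :=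
        measurable_pi_lambda _ fun i => measurable_pi_apply (σ i)
      rw [hμ, Measure.map_map hTσ hpathm]
      have : (fun x : Fin (n+1) → ℝ => x ∘ σ) ∘ (fun ω i => V i ω) =
          fun ω i => V (σ i) ω := rfl
      rw [this, hexch σ]
    have hD0 : μ {x : Fin (n+1) → ℝ | ¬ Function.Injective x} = 0 := by
      have hsub : {x : Fin (n+1) → ℝ | ¬ Function.Injective x} ⊆
          ⋃ i, ⋃ j, ⋃ (_ : i ≠ j), {x : Fin (n+1) → ℝ | x i = x j} := by
        intro x hx
        rw [Set.mem_setOf_eq, Function.not_injective_iff] at hx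
        obtain ⟨a, b, hab, hne⟩ := hx
        exact Set.mem_iUnion.2 ⟨a, Set.mem_iUnion.2 ⟨b, Set.mem_iUnion.2 ⟨hne, hab⟩⟩⟩
      apply measure_mono_null hsub
      refine measure_iUnion_null fun i => measure_iUnion_null fun j =>
        measure_iUnion_null fun hij => ?_
      rw [hμ, Measure.map_apply hpathm
        (measurableSet_eq_fun (measurable_pi_apply i) (measurable_pi_apply j))]
      exact hties i j hij
    have hmain := rank_prob_le n k μ hperm hD0
    have hEmeas : MeasurableSet {x : Fin (n+1) → ℝ | rkF n (Fin.last n) x ≤ k} :=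
      rk_measurable n (Fin.last n) (measurableSet_Iic (a := k))
    have hE : μ {x : Fin (n+1) → ℝ | rkF n (Fin.last n) x ≤ k} ≤
        (k : ℝ≥0∞) / ((n : ℝ≥0∞) + 1) := by
      rw [ENNReal.le_div_iff_mul_le (Or.inl (by simp : ((n : ℝ≥0∞) + 1) ≠ 0))
        (Or.inl (by simp : ((n : ℝ≥0∞) + 1) ≠ ⊤)), mul_comm]
      exact hmain
    have hfin : (k : ℝ≥0∞) / ((n : ℝ≥0∞) + 1) ≤ ENNReal.ofReal (β + 1 / ((n:ℝ) + 1)) := by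
      have h1 : (k : ℝ≥0∞) / ((n : ℝ≥0∞) + 1) = ENNReal.ofReal ((k:ℝ) / ((n:ℝ)+1)) := by
        rw [ENNReal.ofReal_div_of_pos hnpos]
        congr 1
        · exact (ENNReal.ofReal_natCast k).symm
        · rw [show ((n:ℝ) + 1) = ((n+1 : ℕ) : ℝ) by push_cast; ring,
            ENNReal.ofReal_natCast]
          push_cast; ring
      rw [h1]
      exact ENNReal.ofReal_le_ofReal hβsum
    calc ℙ {ω | ((V (Fin.last n) ω : ℝ) : EReal) ≤
          mquantile β
            ((Finset.univ.val.map fun i : Fin n => ((V i.castSucc ω : ℝ) : EReal)) + {⊤})}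
        ≤ ℙ (((fun ω i => V i ω) ⁻¹' {x | rkF n (Fin.last n) x ≤ k}) ∪
            (⋃ i, ⋃ j, ⋃ (_ : i ≠ j), {ω | V i ω = V j ω})) := measure_mono hincl
      _ ≤ ℙ ((fun ω i => V i ω) ⁻¹' {x | rkF n (Fin.last n) x ≤ k}) +
            ℙ (⋃ i, ⋃ j, ⋃ (_ : i ≠ j), {ω | V i ω = V j ω}) := measure_union_le _ _
      _ = μ {x : Fin (n+1) → ℝ | rkF n (Fin.last n) x ≤ k} := by
          rw [hT0, add_zero, hμ, Measure.map_apply hpathm hEmeas]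
      _ ≤ (k : ℝ≥0∞) / ((n : ℝ≥0∞) + 1) := hE
      _ ≤ ENNReal.ofReal (β + 1 / ((n:ℝ) + 1)) := hfin
  · -- degenerate case k = n + 1
    have hkeq : k = n + 1 := by
      have hle : ⌈β * ((n:ℝ)+1)⌉ ≤ (n:ℤ) + 1 := by
        apply Int.ceil_le.2
        push_cast
        nlinarith
      omega
    have h1 : (1:ℝ) ≤ β + 1 / ((n:ℝ)+1) := by
      rw [hkeq] at hkreal
      push_cast at hkreal
      have h2 : (1:ℝ) / ((n:ℝ)+1) * ((n:ℝ)+1) = 1 := by field_simp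
      nlinarith
    calc ℙ _ ≤ 1 := prob_le_one
      _ ≤ ENNReal.ofReal (β + 1 / ((n:ℝ) + 1)) := by
          rw [← ENNReal.ofReal_one]
          exact ENNReal.ofReal_le_ofReal h1
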